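/- arXiv:2511.09494 — 8 statements merged into one kernel-verified Lean document; each statement's English description precedes it below -/
import Mathlib

section
/- For a commutative finite-dimensional Von Neumann algebra Z on a finite-dimensional complex Hilbert space H, there exists a unique family {π_i} of non-zero self-adjoint pairwise orthogonal projectors (π_i π_j = δ_ij π_i) such that Z equals the linear span of {π_i}. -/
/-!
Call a nonzero star projection `p ∈ Z` atomic when `p * Z = ℂ p`. Two atomic projections are
equal or orthogonal: taking adjoints in `p * q = c • p` shows that `p` is a multiple of `q`.
Every family as in the statement consists of atomic projections, and an atomic projection lying
in the span of orthogonal atomic projections is one of them; this gives uniqueness.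

For existence, a star projection `e ∈ Z` that is not atomic is split as `f + (e - f)`, where `f`
is a spectral projection, for a nonzero eigenvalue, of a self-adjoint element `e * b` of `e * Z`
that is not a multiple of `e`. Both pieces generate strictly smaller left ideals than `e`, so in
the Artinian ring of matrices the splitting terminates and `1` lies in the span of finitely many
atomic projections `T`. Commutativity then gives `x = x * 1 ∈ span T` for every `x ∈ Z`.
-/

open Matrix ComplexStarModule

theorem eq_one_of_isIdempotentElem_smul {K A : Type*} [Field K] [Ring A] [Algebra K A]
    {c : K} {p : A} (hp : IsIdempotentElem p) (hcp : IsIdempotentElem (c • p)) (h0 : c • p ≠ 0) :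
    c = 1 := by
  have hc0 : c ≠ 0 := by rintro rfl; simp at h0
  have hsq : (c * c) • p = c • p := by rw [← hcp.eq, smul_mul_smul_comm, hp.eq]
  have hcc : c * c = c := smul_left_injective K (right_ne_zero_of_smul h0) hsq
  exact mul_left_cancel₀ hc0 (hcc.trans (mul_one c).symm)

theorem Ideal.span_singleton_lt_span_singleton_of_mul_eq {R : Type*} [Ring R] {e f : R}
    (hf : IsIdempotentElem f) (hfe : f * e = f) (hef : e * f ≠ e) :
    Ideal.span {f} < Ideal.span {e} := by
  have hle : Ideal.span {f} ≤ Ideal.span {e} :=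
    (Ideal.span_singleton_le_iff_mem _).mpr (Ideal.mem_span_singleton'.mpr ⟨f, hfe⟩)
  refine lt_of_le_not_ge hle fun h => hef ?_
  obtain ⟨a, rfl⟩ := Ideal.mem_span_singleton'.mp ((Ideal.span_singleton_le_iff_mem _).mp h)
  rw [mul_assoc, hf.eq]

section SpectralProjection

variable {A : Type*} [Ring A] [StarRing A] [Algebra ℝ A] [TopologicalSpace A]
  [ContinuousFunctionalCalculus ℝ A IsSelfAdjoint] {b : A}

noncomputable def spectralProjection (b : A) (c : ℝ) : A :=
  cfc (fun x : ℝ => if x = c then 1 else 0) b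

theorem isStarProjection_spectralProjection (hfin : (spectrum ℝ b).Finite) (c : ℝ) :
    IsStarProjection (spectralProjection b c) := by
  refine ⟨?_, cfc_predicate _ b⟩
  rw [IsIdempotentElem, spectralProjection,
    ← cfc_mul _ _ b (hfin.continuousOn _) (hfin.continuousOn _)]
  congr with x
  split_ifs <;> simp

theorem mul_spectralProjection (hb : IsSelfAdjoint b) (hfin : (spectrum ℝ b).Finite) (c : ℝ) :
    b * spectralProjection b c = c • spectralProjection b c := by
  rw [spectralProjection]
  nth_rw 1 [← cfc_id' ℝ b]
  rw [← cfc_mul _ _ b (hfin.continuousOn _) (hfin.continuousOn _),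
    ← cfc_const_mul _ _ b (hfin.continuousOn _)]
  congr with x
  split_ifs with h <;> simp [h]

theorem spectralProjection_ne_zero (hb : IsSelfAdjoint b) (hfin : (spectrum ℝ b).Finite) {c : ℝ}
    (hc : c ∈ spectrum ℝ b) : spectralProjection b c ≠ 0 := by
  intro h
  rw [spectralProjection, ← cfc_zero ℝ b] at h
  simpa using eqOn_of_cfc_eq_cfc h (hfin.continuousOn _) (hfin.continuousOn _) hb hc

theorem IsSelfAdjoint.exists_mem_spectrum_ne_zero (hb : IsSelfAdjoint b) (hb0 : b ≠ 0) :
    ∃ c ∈ spectrum ℝ b, c ≠ 0 := by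
  by_contra! h
  exact hb0 (CFC.eq_zero_of_spectrum_subset_zero b h)

end SpectralProjection

theorem StarSubalgebra.exists_isSelfAdjoint_mul_ne_smul {A : Type*} [Ring A] [StarRing A]
    [Algebra ℂ A] [StarModule ℂ A] (S : StarSubalgebra ℂ A) {e a : A} (ha : a ∈ S)
    (hea : ∀ c : ℂ, e * a ≠ c • e) :
    ∃ b ∈ S, IsSelfAdjoint b ∧ ∀ c : ℂ, e * b ≠ c • e := by
  by_contra! h
  have hre : (ℜ a : A) ∈ S := by
    rw [realPart_apply_coe, ← algebraMap_smul ℂ]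
    exact SMulMemClass.smul_mem _ (add_mem ha (star_mem ha))
  have him : (ℑ a : A) ∈ S := by
    rw [imaginaryPart_apply_coe, ← algebraMap_smul ℂ (2 : ℝ)⁻¹]
    exact SMulMemClass.smul_mem _ (SMulMemClass.smul_mem _ (sub_mem ha (star_mem ha)))
  obtain ⟨c₁, hc₁⟩ := h _ hre (ℜ a).2
  obtain ⟨c₂, hc₂⟩ := h _ him (ℑ a).2
  refine hea (c₁ + Complex.I * c₂) ?_
  rw [← realPart_add_I_smul_imaginaryPart a, mul_add, mul_smul_comm, hc₁, hc₂, smul_smul,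
    add_smul]

section AtomicProjection

variable {K A : Type*} [Field K] [StarRing K] [Ring A] [StarRing A] [Algebra K A]
  [StarModule K A] {Z : StarSubalgebra K A}

structure IsAtomicProjection (Z : StarSubalgebra K A) (p : A) : Prop where
  mem : p ∈ Z
  isStarProjection : IsStarProjection p
  ne_zero : p ≠ 0
  mul_eq_smul : ∀ a ∈ Z, ∃ c : K, p * a = c • p

namespace IsAtomicProjection

theorem eq_or_mul_eq_zero {p q : A} (hp : IsAtomicProjection Z p) (hq : IsAtomicProjection Z q) :
    p = q ∨ p * q = 0 := by
  obtain ⟨c, hc⟩ := hp.mul_eq_smul q hq.mem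
  obtain ⟨d, hd⟩ := hq.mul_eq_smul p hp.mem
  rcases eq_or_ne c 0 with rfl | hc0
  · exact Or.inr (by simpa using hc)
  left
  have hqp : star c • p = d • q :=
    calc star c • p = star (p * q) := by rw [hc, star_smul, hp.isStarProjection.isSelfAdjoint]
      _ = d • q := by
        rw [star_mul, hp.isStarProjection.isSelfAdjoint, hq.isStarProjection.isSelfAdjoint, hd]
  have hpq : p = ((star c)⁻¹ * d) • q := by
    rw [mul_smul, ← hqp, inv_smul_smul₀ (star_ne_zero.mpr hc0)]
  have hk : (star c)⁻¹ * d = 1 := eq_one_of_isIdempotentElem_smul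
    hq.isStarProjection.isIdempotentElem (hpq ▸ hp.isStarProjection.isIdempotentElem)
    (hpq ▸ hp.ne_zero)
  rw [hpq, hk, one_smul]

theorem mem_of_span_eq {P : Set A} (hP : ∀ q ∈ P, IsAtomicProjection Z q) {e : A}
    (he : IsAtomicProjection Z e) (hspan : (Z : Set A) = Submodule.span K P) : e ∈ P := by
  by_contra heP
  have hker : Submodule.span K P ≤ LinearMap.ker (LinearMap.mulLeft K e) :=
    Submodule.span_le.mpr fun q hq =>
      ((he.eq_or_mul_eq_zero (hP q hq)).resolve_left (ne_of_mem_of_not_mem hq heP).symm)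
  have he_span : e ∈ Submodule.span K P := (Set.ext_iff.mp hspan e).mp he.mem
  exact he.ne_zero (he.isStarProjection.isIdempotentElem.eq ▸ hker he_span)

end IsAtomicProjection

theorem isAtomicProjection_of_span_eq {P : Set A} (hP0 : ∀ p ∈ P, p ≠ 0)
    (hPsa : ∀ p ∈ P, star p = p) (hPidem : ∀ p ∈ P, p * p = p)
    (hPorth : ∀ p ∈ P, ∀ q ∈ P, p ≠ q → p * q = 0)
    (hspan : (Z : Set A) = Submodule.span K P) {p : A} (hp : p ∈ P) :
    IsAtomicProjection Z p where
  mem := (Set.ext_iff.mp hspan p).mpr (Submodule.subset_span hp)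
  isStarProjection := ⟨hPidem p hp, hPsa p hp⟩
  ne_zero := hP0 p hp
  mul_eq_smul a ha := by
    have hle : Submodule.span K P ≤ (K ∙ p).comap (LinearMap.mulLeft K p) := by
      refine Submodule.span_le.mpr fun q hq => ?_
      rcases eq_or_ne p q with rfl | hpq
      · simp [hPidem p hq]
      · simp [hPorth p hp q hq hpq]
    obtain ⟨c, hc⟩ := Submodule.mem_span_singleton.mp (hle ((Set.ext_iff.mp hspan a).mp ha))
    exact ⟨c, hc.symm⟩

theorem span_eq_of_one_mem_span (hcomm : ∀ a ∈ Z, ∀ b ∈ Z, a * b = b * a) {T : Set A}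
    (hT : ∀ p ∈ T, IsAtomicProjection Z p) (h1 : 1 ∈ Submodule.span K T) :
    (Z : Set A) = Submodule.span K T := by
  refine Set.Subset.antisymm (fun x hx => ?_) ?_
  · have hle : Submodule.span K T ≤ (Submodule.span K T).comap (LinearMap.mulLeft K x) := by
      refine Submodule.span_le.mpr fun q hq => ?_
      obtain ⟨c, hc⟩ := (hT q hq).mul_eq_smul x hx
      simpa [hcomm x hx q (hT q hq).mem, hc] using
        Submodule.smul_mem _ c (Submodule.subset_span hq)
    simpa using hle h1
  · exact (Submodule.span_le (p := Subalgebra.toSubmodule Z.toSubalgebra)).mpr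
      fun q hq => (hT q hq).mem

end AtomicProjection

section Matrix

variable {n : Type*} [Fintype n] [DecidableEq n] {Z : StarSubalgebra ℂ (Matrix n n ℂ)}

theorem exists_isStarProjection_mul_eq_of_not_isAtomicProjection
    (hcomm : ∀ a ∈ Z, ∀ b ∈ Z, a * b = b * a) {e : Matrix n n ℂ} (heZ : e ∈ Z)
    (he : IsStarProjection e) (he0 : e ≠ 0) (hat : ¬ IsAtomicProjection Z e) :
    ∃ f ∈ Z, IsStarProjection f ∧ f ≠ 0 ∧ f ≠ e ∧ e * f = f := by
  obtain ⟨a, ha, hea⟩ : ∃ a ∈ Z, ∀ c : ℂ, e * a ≠ c • e := by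
    by_contra! h
    exact hat ⟨heZ, he, he0, h⟩
  obtain ⟨b, hbZ, hb, heb⟩ := Z.exists_isSelfAdjoint_mul_ne_smul ha hea
  have hebZ : e * b ∈ Z := mul_mem heZ hbZ
  have hsa : IsSelfAdjoint (e * b) :=
    (IsSelfAdjoint.commute_iff he.isSelfAdjoint hb).mp (hcomm e heZ b hbZ)
  obtain ⟨c, hc, hc0⟩ := hsa.exists_mem_spectrum_ne_zero (by simpa using heb 0)
  have hfin : (spectrum ℝ (e * b)).Finite := Matrix.finite_real_spectrum
  have hmul := mul_spectralProjection hsa hfin c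
  have : IsClosed (Z : Set (Matrix n n ℂ)) :=
    (Subalgebra.toSubmodule Z.toSubalgebra).closed_of_finiteDimensional
  refine ⟨spectralProjection (e * b) c, cfc_mem _ hebZ,
    isStarProjection_spectralProjection hfin c, spectralProjection_ne_zero hsa hfin hc,
    fun hfe => heb c ?_, ?_⟩
  · rw [hfe, mul_assoc, hcomm b hbZ e heZ, ← mul_assoc, he.isIdempotentElem.eq] at hmul
    rw [hmul, Complex.coe_smul]
  · rw [← inv_smul_smul₀ hc0 (spectralProjection (e * b) c), ← hmul, mul_smul_comm, ← mul_assoc,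
      ← mul_assoc, he.isIdempotentElem.eq]

theorem mem_span_isAtomicProjection (hcomm : ∀ a ∈ Z, ∀ b ∈ Z, a * b = b * a)
    {e : Matrix n n ℂ} (heZ : e ∈ Z) (he : IsStarProjection e) :
    e ∈ Submodule.span ℂ {p | IsAtomicProjection Z p} := by
  induction e using (wellFounded_lt.onFun (f := fun e : Matrix n n ℂ => Ideal.span {e})).induction
    with | _ e ih
  by_cases he0 : e = 0
  · exact he0 ▸ zero_mem _
  by_cases hat : IsAtomicProjection Z e
  · exact Submodule.subset_span hat
  obtain ⟨f, hfZ, hf, hf0, hfe, hef⟩ :=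
    exists_isStarProjection_mul_eq_of_not_isAtomicProjection hcomm heZ he he0 hat
  have hfe' : f * e = f := by rw [hcomm f hfZ e heZ, hef]
  have hsub : e * (e - f) = e - f := by rw [mul_sub, he.isIdempotentElem.eq, hef]
  rw [← add_sub_cancel f e]
  have hg : IsStarProjection (e - f) := hf.sub_of_mul_eq_right he hef
  refine add_mem (ih f ?_ hfZ hf) (ih (e - f) ?_ (sub_mem heZ hfZ) hg)
  · exact Ideal.span_singleton_lt_span_singleton_of_mul_eq hf.isIdempotentElem hfe' (by rwa [hef])
  · refine Ideal.span_singleton_lt_span_singleton_of_mul_eq hg.isIdempotentElem ?_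
      (by simpa [hsub] using hf0)
    rw [sub_mul, he.isIdempotentElem.eq, hfe']

end Matrix

/-- For a commutative finite-dimensional Von Neumann algebra `Z` on a
finite-dimensional complex Hilbert space (modelled as a unital star-subalgebra of the
operators, i.e. matrices), there exists a unique family of non-zero self-adjoint
pairwise orthogonal projectors whose linear span is `Z`. -/
theorem atomic_projectors_exist_unique {n : Type} [Fintype n] [DecidableEq n]
    (Z : StarSubalgebra ℂ (Matrix n n ℂ))
    (hcomm : ∀ a ∈ Z, ∀ b ∈ Z, a * b = b * a) :
    ∃! P : Finset (Matrix n n ℂ),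
      (∀ p ∈ P, p ≠ 0) ∧
      (∀ p ∈ P, pᴴ = p) ∧
      (∀ p ∈ P, p * p = p) ∧
      (∀ p ∈ P, ∀ q ∈ P, p ≠ q → p * q = 0) ∧
      (Z : Set (Matrix n n ℂ)) =
        (Submodule.span ℂ (P : Set (Matrix n n ℂ)) : Set (Matrix n n ℂ)) := by
  obtain ⟨T, hTat, hT1⟩ := Submodule.mem_span_finite_of_mem_span
    (mem_span_isAtomicProjection hcomm (one_mem Z) (IsStarProjection.one _))
  have hT : ∀ p ∈ (T : Set (Matrix n n ℂ)), IsAtomicProjection Z p := fun p hp => hTat hp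
  have hTspan := span_eq_of_one_mem_span hcomm hT hT1
  refine ⟨T, ⟨fun p hp => (hT p hp).ne_zero, fun p hp => (hT p hp).isStarProjection.isSelfAdjoint,
    fun p hp => (hT p hp).isStarProjection.isIdempotentElem,
    fun p hp q hq hpq => ((hT p hp).eq_or_mul_eq_zero (hT q hq)).resolve_left hpq,
    hTspan⟩, ?_⟩
  rintro P ⟨hP0, hPsa, hPidem, hPorth, hPspan⟩
  have hP : ∀ p ∈ (P : Set (Matrix n n ℂ)), IsAtomicProjection Z p := fun p hp =>
    isAtomicProjection_of_span_eq hP0 hPsa hPidem hPorth hPspan hp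
  exact Finset.coe_injective <| Set.Subset.antisymm
    (fun p hp => (hP p hp).mem_of_span_eq hT hTspan)
    (fun p hp => (hT p hp).mem_of_span_eq hP hPspan)
end

section
/- Let χ : H → H_L ⊗ H_R be an isometry with π = χχ†, and let A ∈ L(H_L) satisfy both Tr(π(A⊗1)†(A⊗1)π) = Tr(π(A⊗1)†π(A⊗1)π) and Tr(π(A⊗1)(A⊗1)†π) = Tr(π(A⊗1)π(A⊗1)†π). Then π(A⊗1) = (A⊗1)π. -/
open Matrix Kronecker

lemma trace_conjTranspose_mul_self_eq_zero' {m n : Type} [Fintype m] [Fintype n]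
    (X : Matrix m n ℂ) (h : (Xᴴ * X).trace = 0) : X = 0 := by
  have key : (Xᴴ * X).trace = ((∑ j, ∑ i, Complex.normSq (X i j) : ℝ) : ℂ) := by
    simp only [Matrix.trace, Matrix.diag, Matrix.mul_apply, Matrix.conjTranspose_apply]
    push_cast
    congr 1; ext j; congr 1; ext i
    rw [Complex.normSq_eq_conj_mul_self]; rfl
  rw [key] at h
  norm_cast at h
  have h' : ∀ j ∈ Finset.univ, ∀ i ∈ Finset.univ, Complex.normSq (X i j) = 0 := by
    intro j _ i _
    have := Finset.sum_eq_zero_iff_of_nonneg (fun j _ => Finset.sum_nonneg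
      (fun i _ => Complex.normSq_nonneg (X i j))) |>.mp h j (Finset.mem_univ j)
    exact (Finset.sum_eq_zero_iff_of_nonneg
      (fun i _ => Complex.normSq_nonneg (X i j))).mp this i (Finset.mem_univ i)
  ext i j
  simpa using Complex.normSq_eq_zero.mp (h' j (Finset.mem_univ j) i (Finset.mem_univ i))

theorem general_comm {m : Type} [Fintype m] [DecidableEq m]
    (π B : Matrix m m ℂ) (hp2 : π * π = π) (hpH : πᴴ = π)
    (h1 : (π * Bᴴ * B * π).trace = (π * Bᴴ * π * B * π).trace)
    (h2 : (π * B * Bᴴ * π).trace = (π * B * π * Bᴴ * π).trace) :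
    π * B = B * π := by
  have e1 : B * π = π * B * π := by
    have hX : B * π - π * (B * π) = 0 := by
      apply trace_conjTranspose_mul_self_eq_zero'
      have expand : (B * π - π * (B * π))ᴴ * (B * π - π * (B * π)) =
          π * Bᴴ * B * π - π * Bᴴ * π * B * π := by
        simp only [conjTranspose_sub, conjTranspose_mul, hpH]
        rw [Matrix.sub_mul, Matrix.mul_sub, Matrix.mul_sub]
        have : πᴴ = π := hpH
        -- reassociate
        simp only [Matrix.mul_assoc]
        rw [show π * (π * (B * π)) = π * (B * π) by rw [← Matrix.mul_assoc, hp2]]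
        abel
      rw [expand, trace_sub, sub_eq_zero]
      simp only [Matrix.mul_assoc] at h1 ⊢
      exact h1
    have := sub_eq_zero.mp hX
    rw [this, Matrix.mul_assoc]
  have e2 : Bᴴ * π = π * (Bᴴ * π) := by
    have hX : Bᴴ * π - π * (Bᴴ * π) = 0 := by
      apply trace_conjTranspose_mul_self_eq_zero'
      have expand : (Bᴴ * π - π * (Bᴴ * π))ᴴ * (Bᴴ * π - π * (Bᴴ * π)) =
          π * B * Bᴴ * π - π * B * π * Bᴴ * π := by
        simp only [conjTranspose_sub, conjTranspose_mul, hpH, conjTranspose_conjTranspose]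
        rw [Matrix.sub_mul, Matrix.mul_sub, Matrix.mul_sub]
        simp only [Matrix.mul_assoc]
        rw [show π * (π * (Bᴴ * π)) = π * (Bᴴ * π) by rw [← Matrix.mul_assoc, hp2]]
        abel
      rw [expand, trace_sub, sub_eq_zero]
      simp only [Matrix.mul_assoc] at h2 ⊢
      exact h2
    exact sub_eq_zero.mp hX
  have e3 : π * B = π * B * π := by
    have h := congrArg conjTranspose e2
    simp only [conjTranspose_mul, hpH, conjTranspose_conjTranspose, Matrix.mul_assoc] at h ⊢
    exact h
  rw [e3]; exact e1.symm

/-- Let `χ` be an isometry with `π = χχ†`, and `A ∈ L(H_L)` satisfy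
`Tr(π(A⊗1)†(A⊗1)π) = Tr(π(A⊗1)†π(A⊗1)π)` and
`Tr(π(A⊗1)(A⊗1)†π) = Tr(π(A⊗1)π(A⊗1)†π)`. Then `π(A⊗1) = (A⊗1)π`. -/
theorem trace_conditions_imply_commutation {n l r : Type} [Fintype n] [DecidableEq n]
    [Fintype l] [DecidableEq l] [Fintype r] [DecidableEq r]
    (χ : Matrix (l × r) n ℂ) (hχ : χᴴ * χ = 1) (A : Matrix l l ℂ)
    (h1 : ((χ * χᴴ) * (A ⊗ₖ (1 : Matrix r r ℂ))ᴴ * (A ⊗ₖ (1 : Matrix r r ℂ)) *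
            (χ * χᴴ)).trace =
          ((χ * χᴴ) * (A ⊗ₖ (1 : Matrix r r ℂ))ᴴ * (χ * χᴴ) *
            (A ⊗ₖ (1 : Matrix r r ℂ)) * (χ * χᴴ)).trace)
    (h2 : ((χ * χᴴ) * (A ⊗ₖ (1 : Matrix r r ℂ)) * (A ⊗ₖ (1 : Matrix r r ℂ))ᴴ *
            (χ * χᴴ)).trace =
          ((χ * χᴴ) * (A ⊗ₖ (1 : Matrix r r ℂ)) * (χ * χᴴ) *
            (A ⊗ₖ (1 : Matrix r r ℂ))ᴴ * (χ * χᴴ)).trace) :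
    (χ * χᴴ) * (A ⊗ₖ (1 : Matrix r r ℂ)) = (A ⊗ₖ (1 : Matrix r r ℂ)) * (χ * χᴴ) := by
  have hp2 : (χ * χᴴ) * (χ * χᴴ) = χ * χᴴ := by
    rw [Matrix.mul_assoc, ← Matrix.mul_assoc χᴴ, hχ, Matrix.one_mul]
  have hpH : (χ * χᴴ)ᴴ = χ * χᴴ := by
    simp [conjTranspose_mul]
  exact general_comm (χ * χᴴ) (A ⊗ₖ (1 : Matrix r r ℂ)) hp2 hpH h1 h2
end

section
/- Let χ : H → H_L ⊗ H_R be an isometry and A ∈ L(H). A is strictly χ-local (i.e., there exists Ã ∈ L(H_L) with Aχ† = χ†(Ã⊗1) and χA = (Ã⊗1)χ) if and only if A = χ†(Ã⊗1)χ for some Ã ∈ L(H_L) satisfying χχ†(Ã⊗1) = (Ã⊗1)χχ†. -/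
open Matrix Kronecker

/-- For an isometry `χ : H → H_L ⊗ H_R` and `A ∈ L(H)`: `A` is strictly
`χ`-local (there exists `Ã` with `Aχ† = χ†(Ã⊗1)` and `χA = (Ã⊗1)χ`) iff
`A = χ†(Ã⊗1)χ` for some `Ã` satisfying `χχ†(Ã⊗1) = (Ã⊗1)χχ†`. -/
theorem strictly_local_iff_consistent_rep {n l r : Type} [Fintype n] [DecidableEq n]
    [Fintype l] [DecidableEq l] [Fintype r] [DecidableEq r]
    (χ : Matrix (l × r) n ℂ) (hχ : χᴴ * χ = 1) (A : Matrix n n ℂ) :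
    (∃ At : Matrix l l ℂ,
        A * χᴴ = χᴴ * (At ⊗ₖ (1 : Matrix r r ℂ)) ∧
        χ * A = (At ⊗ₖ (1 : Matrix r r ℂ)) * χ) ↔
    (∃ At : Matrix l l ℂ,
        (χ * χᴴ) * (At ⊗ₖ (1 : Matrix r r ℂ)) = (At ⊗ₖ (1 : Matrix r r ℂ)) * (χ * χᴴ) ∧
        A = χᴴ * (At ⊗ₖ (1 : Matrix r r ℂ)) * χ) := by
  constructor
  · rintro ⟨At, h1, h2⟩
    refine ⟨At, ?_, ?_⟩
    · calc χ * χᴴ * (At ⊗ₖ (1 : Matrix r r ℂ)) = χ * (χᴴ * (At ⊗ₖ (1 : Matrix r r ℂ))) := by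
            rw [Matrix.mul_assoc]
        _ = χ * (A * χᴴ) := by rw [h1]
        _ = (χ * A) * χᴴ := by rw [Matrix.mul_assoc]
        _ = (At ⊗ₖ (1 : Matrix r r ℂ)) * (χ * χᴴ) := by rw [h2, Matrix.mul_assoc]
    · calc A = A * 1 := by rw [Matrix.mul_one]
        _ = A * (χᴴ * χ) := by rw [hχ]
        _ = (A * χᴴ) * χ := by rw [Matrix.mul_assoc]
        _ = χᴴ * (At ⊗ₖ (1 : Matrix r r ℂ)) * χ := by rw [h1]
  · rintro ⟨At, hc, hA⟩
    refine ⟨At, ?_, ?_⟩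
    · calc A * χᴴ = χᴴ * (At ⊗ₖ (1 : Matrix r r ℂ)) * χ * χᴴ := by rw [hA]
        _ = χᴴ * ((χ * χᴴ) * (At ⊗ₖ (1 : Matrix r r ℂ))) := by
            rw [hc]; simp only [Matrix.mul_assoc]
        _ = (χᴴ * χ) * χᴴ * (At ⊗ₖ (1 : Matrix r r ℂ)) := by simp only [Matrix.mul_assoc]
        _ = χᴴ * (At ⊗ₖ (1 : Matrix r r ℂ)) := by rw [hχ, Matrix.one_mul]
    · calc χ * A = (χ * χᴴ) * (At ⊗ₖ (1 : Matrix r r ℂ)) * χ := by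
            rw [hA]; simp only [Matrix.mul_assoc]
        _ = (At ⊗ₖ (1 : Matrix r r ℂ)) * ((χ * χᴴ) * χ) := by rw [hc, Matrix.mul_assoc]
        _ = (At ⊗ₖ (1 : Matrix r r ℂ)) * (χ * (χᴴ * χ)) := by simp only [Matrix.mul_assoc]
        _ = (At ⊗ₖ (1 : Matrix r r ℂ)) * χ := by rw [hχ, Matrix.mul_one]
end

section
/- Define comprehension between isometries ζ : H → H_L^ζ ⊗ H_R^ζ and χ : H → H_L^χ ⊗ H_R^χ by: ζ ⊑ χ iff there exist a finite-dimensional Hilbert space M and isometries b : H_R^ζ → M ⊗ H_R^χ and w : H_L^χ → H_L^ζ ⊗ M such that (1 ⊗ b)ζ = (w ⊗ 1)χ. Then ⊑ is reflexive and transitive (a preorder) on the set of such isometries out of H. -/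
open Matrix Kronecker

/-- A splitting map on a system with index type `n`: an isometry
`χ : H → H_L ⊗ H_R` (all spaces finite-dimensional). -/
structure Split (n : Type) [Fintype n] [DecidableEq n] where
  l : Type
  r : Type
  [fl : Fintype l]
  [dl : DecidableEq l]
  [fr : Fintype r]
  [dr : DecidableEq r]
  map : Matrix (l × r) n ℂ
  isom : mapᴴ * map = 1

attribute [instance] Split.fl Split.dl Split.fr Split.dr

/-- A witness that `ζ` is comprehended in `χ`: a finite-dimensional space `M`
and isometries `b : H_R^ζ → M ⊗ H_R^χ`, `w : H_L^χ → H_L^ζ ⊗ M` with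
`(1 ⊗ b)ζ = (w ⊗ 1)χ` (after reassociation of tensor factors). -/
structure CompWitness {n : Type} [Fintype n] [DecidableEq n] (ζ χ : Split n) : Type 1 where
  m : Type
  [fm : Fintype m]
  [dm : DecidableEq m]
  b : Matrix (m × χ.r) ζ.r ℂ
  w : Matrix (ζ.l × m) χ.l ℂ
  hb : bᴴ * b = 1
  hw : wᴴ * w = 1
  heq : ((1 : Matrix ζ.l ζ.l ℂ) ⊗ₖ b) * ζ.map =
    ((w ⊗ₖ (1 : Matrix χ.r χ.r ℂ)) * χ.map).submatrix
      (Equiv.prodAssoc ζ.l m χ.r).symm id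

/-- Comprehension: `ζ ⊑ χ`. -/
def Comp {n : Type} [Fintype n] [DecidableEq n] (ζ χ : Split n) : Prop :=
  Nonempty (CompWitness ζ χ)

lemma kronT {l m p q : Type} [Fintype l] [Fintype m] [Fintype p] [Fintype q]
    (A : Matrix l m ℂ) (B : Matrix p q ℂ) : (A ⊗ₖ B)ᴴ = Aᴴ ⊗ₖ Bᴴ := by
  ext ⟨a,b⟩ ⟨c,d⟩
  simp [Matrix.conjTranspose_apply, Matrix.kroneckerMap_apply, mul_comm]

lemma compEq_iff {n : Type} [Fintype n] [DecidableEq n]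
    {l r M L R : Type} [Fintype l] [DecidableEq l] [Fintype r] [DecidableEq r]
    [Fintype M] [DecidableEq M] [Fintype L] [DecidableEq L] [Fintype R] [DecidableEq R]
    (Z : Matrix (l × r) n ℂ) (X : Matrix (L × R) n ℂ)
    (b : Matrix (M × R) r ℂ) (w : Matrix (l × M) L ℂ) :
    (((1 : Matrix l l ℂ) ⊗ₖ b) * Z =
      ((w ⊗ₖ (1 : Matrix R R ℂ)) * X).submatrix (Equiv.prodAssoc l M R).symm id) ↔
    ∀ (i : l) (u : M) (k : R) (j : n),
      (∑ s : r, b (u,k) s * Z (i,s) j) = ∑ c : L, w (i,u) c * X (c,k) j := by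
  constructor
  · intro h i u k j
    have := congrFun (congrFun h (i,(u,k))) j
    simpa [Matrix.mul_apply, Matrix.kroneckerMap_apply, Matrix.one_apply,
      Fintype.sum_prod_type, ite_mul, zero_mul, mul_ite, mul_zero] using this
  · intro h
    ext ⟨i, u, k⟩ j
    simpa [Matrix.mul_apply, Matrix.kroneckerMap_apply, Matrix.one_apply,
      Fintype.sum_prod_type, ite_mul, zero_mul, mul_ite, mul_zero] using h i u k j

/-- Comprehension is a preorder (reflexive and transitive) on the
splitting maps out of `H`. -/
theorem comp_is_preorder {n : Type} [Fintype n] [DecidableEq n] :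
    (∀ χ : Split n, Comp χ χ) ∧
    (∀ ξ ζ χ : Split n, Comp ξ ζ → Comp ζ χ → Comp ξ χ) := by
  constructor
  · intro χ
    refine ⟨⟨PUnit,
      (1 : Matrix χ.r χ.r ℂ).submatrix (⇑(Equiv.punitProd χ.r)) id,
      (1 : Matrix χ.l χ.l ℂ).submatrix (⇑(Equiv.prodPUnit χ.l)) id, ?_, ?_, ?_⟩⟩
    · rw [Matrix.conjTranspose_submatrix, Matrix.conjTranspose_one,
        Matrix.submatrix_mul_equiv, Matrix.one_mul, Matrix.submatrix_id_id]
    · rw [Matrix.conjTranspose_submatrix, Matrix.conjTranspose_one,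
        Matrix.submatrix_mul_equiv, Matrix.one_mul, Matrix.submatrix_id_id]
    · rw [compEq_iff]
      intro i u k j
      simp [Matrix.one_apply, Finset.sum_ite_eq, ite_mul, zero_mul]
  · rintro ξ ζ χ ⟨h1⟩ ⟨h2⟩
    obtain ⟨m1, b1, w1, hb1, hw1, he1⟩ := h1
    obtain ⟨m2, b2, w2, hb2, hw2, he2⟩ := h2
    set b : Matrix ((m1 × m2) × χ.r) ξ.r ℂ :=
      (((1 : Matrix m1 m1 ℂ) ⊗ₖ b2) * b1).submatrix (⇑(Equiv.prodAssoc m1 m2 χ.r)) id with hbdef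
    set w : Matrix (ξ.l × (m1 × m2)) χ.l ℂ :=
      ((w1 ⊗ₖ (1 : Matrix m2 m2 ℂ)) * w2).submatrix (⇑(Equiv.prodAssoc ξ.l m1 m2).symm) id with hwdef
    have H1 := (compEq_iff ξ.map ζ.map b1 w1).mp he1
    have H2 := (compEq_iff ζ.map χ.map b2 w2).mp he2
    refine ⟨⟨m1 × m2, b, w, ?_, ?_, ?_⟩⟩
    · rw [hbdef, Matrix.conjTranspose_submatrix, Matrix.submatrix_mul_equiv,
        Matrix.submatrix_id_id, Matrix.conjTranspose_mul, kronT,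
        Matrix.conjTranspose_one, Matrix.mul_assoc, ← Matrix.mul_assoc (1 ⊗ₖ b2ᴴ),
        ← Matrix.mul_kronecker_mul, hb2, Matrix.one_mul, Matrix.one_kronecker_one,
        Matrix.one_mul, hb1]
    · rw [hwdef, Matrix.conjTranspose_submatrix, Matrix.submatrix_mul_equiv,
        Matrix.submatrix_id_id, Matrix.conjTranspose_mul, kronT,
        Matrix.conjTranspose_one, Matrix.mul_assoc, ← Matrix.mul_assoc (w1ᴴ ⊗ₖ 1),
        ← Matrix.mul_kronecker_mul, hw1, Matrix.mul_one, Matrix.one_kronecker_one,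
        Matrix.one_mul, hw2]
    · rw [compEq_iff]
      rintro i ⟨u, v⟩ k j
      have hbapp : ∀ s, b ((u,v),k) s = ∑ t, b2 (v,k) t * b1 (u,t) s := by
        intro s
        simp [hbdef, Matrix.mul_apply, Matrix.kroneckerMap_apply, Matrix.one_apply,
          Fintype.sum_prod_type, ite_mul, zero_mul]
      have hwapp : ∀ c, w (i,(u,v)) c = ∑ d, w1 (i,u) d * w2 (d,v) c := by
        intro c
        simp [hwdef, Matrix.mul_apply, Matrix.kroneckerMap_apply, Matrix.one_apply,
          Fintype.sum_prod_type, mul_ite, mul_zero, ite_mul, zero_mul]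
      calc (∑ s, b ((u,v),k) s * ξ.map (i,s) j)
          = ∑ s, ∑ t, b2 (v,k) t * (b1 (u,t) s * ξ.map (i,s) j) := by
            simp only [hbapp, Finset.sum_mul, mul_assoc]
        _ = ∑ t, b2 (v,k) t * ∑ s, b1 (u,t) s * ξ.map (i,s) j := by
            rw [Finset.sum_comm]; simp [Finset.mul_sum]
        _ = ∑ t, b2 (v,k) t * ∑ c, w1 (i,u) c * ζ.map (c,t) j := by
            simp only [H1]
        _ = ∑ c, w1 (i,u) c * ∑ t, b2 (v,k) t * ζ.map (c,t) j := by
            simp only [Finset.mul_sum]; rw [Finset.sum_comm]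
            congr 1; ext c; congr 1; ext t; ring
        _ = ∑ c, w1 (i,u) c * ∑ d, w2 (c,v) d * χ.map (d,k) j := by
            simp only [H2]
        _ = ∑ d, (∑ c, w1 (i,u) c * w2 (c,v) d) * χ.map (d,k) j := by
            simp only [Finset.mul_sum, Finset.sum_mul]; rw [Finset.sum_comm]
            congr 1; ext c; congr 1; ext d; ring
        _ = ∑ c, w (i,(u,v)) c * χ.map (c,k) j := by
            simp only [hwapp]
end

section
/- If ζ ⊑ χ for isometries ζ and χ out of H, then every strictly ζ-local operator is strictly χ-local; concretely, if Ã ∈ L(H_L^ζ) satisfies ζζ†(Ã⊗1) = (Ã⊗1)ζζ† and A = ζ†(Ã⊗1)ζ, then à := w†(Ã ⊗ 1_M)w satisfies χχ†(Ã⊗1) = (Ã⊗1)χχ† and A = χ†(Ã⊗1)χ, where w is the left isometry witnessing the comprehension. -/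
open Matrix Kronecker

lemma key_intertwine {n lz rz lx rx m : Type}
    [Fintype n] [DecidableEq n]
    [Fintype lz] [DecidableEq lz] [Fintype rz] [DecidableEq rz]
    [Fintype lx] [DecidableEq lx] [Fintype rx] [DecidableEq rx]
    [Fintype m] [DecidableEq m]
    (ζ : Matrix (lz × rz) n ℂ) (χ : Matrix (lx × rx) n ℂ)
    (hζ : ζᴴ * ζ = 1)
    (b : Matrix (m × rx) rz ℂ) (w : Matrix (lz × m) lx ℂ)
    (hw : wᴴ * w = 1)
    (heq : ((1 : Matrix lz lz ℂ) ⊗ₖ b) * ζ =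
      ((w ⊗ₖ (1 : Matrix rx rx ℂ)) * χ).submatrix (Equiv.prodAssoc lz m rx).symm id)
    (At : Matrix lz lz ℂ)
    (hcons : (ζ * ζᴴ) * (At ⊗ₖ (1 : Matrix rz rz ℂ)) =
      (At ⊗ₖ (1 : Matrix rz rz ℂ)) * (ζ * ζᴴ)) :
    ((wᴴ * (At ⊗ₖ (1 : Matrix m m ℂ)) * w) ⊗ₖ (1 : Matrix rx rx ℂ)) * χ =
      χ * (ζᴴ * (At ⊗ₖ (1 : Matrix rz rz ℂ)) * ζ) := by
  set e := Equiv.prodAssoc lz m rx with he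
  set A' := ζᴴ * (At ⊗ₖ (1 : Matrix rz rz ℂ)) * ζ with hA'
  have h0 : ζ * ζᴴ * ζ = ζ := by rw [Matrix.mul_assoc, hζ, Matrix.mul_one]
  have h1 : (At ⊗ₖ (1 : Matrix rz rz ℂ)) * ζ = ζ * A' := by
    calc (At ⊗ₖ (1 : Matrix rz rz ℂ)) * ζ
        = (At ⊗ₖ (1 : Matrix rz rz ℂ)) * (ζ * ζᴴ * ζ) := by rw [h0]
      _ = ζ * ζᴴ * (At ⊗ₖ (1 : Matrix rz rz ℂ)) * ζ := by
          rw [← Matrix.mul_assoc, ← hcons]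
      _ = ζ * A' := by rw [hA', Matrix.mul_assoc, Matrix.mul_assoc, Matrix.mul_assoc]
  have h3 : (w ⊗ₖ (1 : Matrix rx rx ℂ)) * χ =
      (((1 : Matrix lz lz ℂ) ⊗ₖ b) * ζ).submatrix e id := by
    rw [heq, submatrix_submatrix]
    simp
  have h4 : ((At ⊗ₖ (1 : Matrix m m ℂ)) ⊗ₖ (1 : Matrix rx rx ℂ)) =
      (At ⊗ₖ (1 : Matrix (m × rx) (m × rx) ℂ)).submatrix e e := by
    rw [← Matrix.one_kronecker_one, ← Matrix.kronecker_assoc' At (1 : Matrix m m ℂ)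
      (1 : Matrix rx rx ℂ), submatrix_submatrix]
    simp [he]
  have h6 : At ⊗ₖ (1 : Matrix (m × rx) (m × rx) ℂ) * ((1 : Matrix lz lz ℂ) ⊗ₖ b) =
      ((1 : Matrix lz lz ℂ) ⊗ₖ b) * (At ⊗ₖ (1 : Matrix rz rz ℂ)) := by
    rw [← mul_kronecker_mul, ← mul_kronecker_mul]
    simp
  have hexp : ((wᴴ * (At ⊗ₖ (1 : Matrix m m ℂ)) * w) ⊗ₖ (1 : Matrix rx rx ℂ)) =
      (wᴴ ⊗ₖ (1 : Matrix rx rx ℂ)) * ((At ⊗ₖ (1 : Matrix m m ℂ)) ⊗ₖ (1 : Matrix rx rx ℂ))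
        * (w ⊗ₖ (1 : Matrix rx rx ℂ)) := by
    rw [← mul_kronecker_mul, ← mul_kronecker_mul]
    simp
  calc ((wᴴ * (At ⊗ₖ (1 : Matrix m m ℂ)) * w) ⊗ₖ (1 : Matrix rx rx ℂ)) * χ
      = (wᴴ ⊗ₖ (1 : Matrix rx rx ℂ)) *
        (((At ⊗ₖ (1 : Matrix m m ℂ)) ⊗ₖ (1 : Matrix rx rx ℂ)) *
          ((w ⊗ₖ (1 : Matrix rx rx ℂ)) * χ)) := by
        rw [hexp, Matrix.mul_assoc, Matrix.mul_assoc]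
    _ = (wᴴ ⊗ₖ (1 : Matrix rx rx ℂ)) *
        ((At ⊗ₖ (1 : Matrix (m × rx) (m × rx) ℂ)).submatrix e e *
          (((1 : Matrix lz lz ℂ) ⊗ₖ b) * ζ).submatrix e id) := by rw [h3, h4]
    _ = (wᴴ ⊗ₖ (1 : Matrix rx rx ℂ)) *
        ((At ⊗ₖ (1 : Matrix (m × rx) (m × rx) ℂ)) *
          (((1 : Matrix lz lz ℂ) ⊗ₖ b) * ζ)).submatrix e id := by
        rw [submatrix_mul_equiv]
    _ = (wᴴ ⊗ₖ (1 : Matrix rx rx ℂ)) *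
        ((((1 : Matrix lz lz ℂ) ⊗ₖ b) * ζ * A')).submatrix e id := by
        rw [← Matrix.mul_assoc, h6, Matrix.mul_assoc, h1, ← Matrix.mul_assoc]
    _ = (wᴴ ⊗ₖ (1 : Matrix rx rx ℂ)) *
        ((((1 : Matrix lz lz ℂ) ⊗ₖ b) * ζ).submatrix e id * A'.submatrix
          (id : n → n) (id : n → n)) := by
        rw [Matrix.submatrix_mul _ _ e (id : n → n) (id : n → n) Function.bijective_id]
    _ = (wᴴ ⊗ₖ (1 : Matrix rx rx ℂ)) * ((w ⊗ₖ (1 : Matrix rx rx ℂ)) * χ * A') := by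
        rw [h3, submatrix_id_id]
    _ = χ * A' := by
        rw [← Matrix.mul_assoc ((wᴴ : Matrix lx (lz × m) ℂ) ⊗ₖ (1 : Matrix rx rx ℂ)),
          ← Matrix.mul_assoc ((wᴴ : Matrix lx (lz × m) ℂ) ⊗ₖ (1 : Matrix rx rx ℂ)),
          ← mul_kronecker_mul, hw, Matrix.one_mul, Matrix.one_kronecker_one, Matrix.one_mul]

lemma kron_conjT {α β γ δ : Type} (A : Matrix α β ℂ) (B : Matrix γ δ ℂ) :
    (A ⊗ₖ B)ᴴ = Aᴴ ⊗ₖ Bᴴ := by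
  ext ⟨i, j⟩ ⟨k, l⟩
  simp [conjTranspose_apply, kroneckerMap_apply, star_mul', mul_comm]

/-- If `ζ ⊑ χ` with witnessing isometries `b` and `w`, then every strictly
`ζ`-local operator `A = ζ†(Ã⊗1)ζ` (with `Ã` `ζ`-consistent) is strictly `χ`-local with
consistent representative `Â = w†(Ã ⊗ 1_M)w`. -/
theorem comprehension_implies_strictly_local_inclusion {n lz rz lx rx m : Type}
    [Fintype n] [DecidableEq n]
    [Fintype lz] [DecidableEq lz] [Fintype rz] [DecidableEq rz]
    [Fintype lx] [DecidableEq lx] [Fintype rx] [DecidableEq rx]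
    [Fintype m] [DecidableEq m]
    (ζ : Matrix (lz × rz) n ℂ) (χ : Matrix (lx × rx) n ℂ)
    (hζ : ζᴴ * ζ = 1) (hχ : χᴴ * χ = 1)
    (b : Matrix (m × rx) rz ℂ) (w : Matrix (lz × m) lx ℂ)
    (hb : bᴴ * b = 1) (hw : wᴴ * w = 1)
    (heq : ((1 : Matrix lz lz ℂ) ⊗ₖ b) * ζ =
      ((w ⊗ₖ (1 : Matrix rx rx ℂ)) * χ).submatrix (Equiv.prodAssoc lz m rx).symm id)
    (At : Matrix lz lz ℂ)
    (hcons : (ζ * ζᴴ) * (At ⊗ₖ (1 : Matrix rz rz ℂ)) =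
      (At ⊗ₖ (1 : Matrix rz rz ℂ)) * (ζ * ζᴴ))
    (A : Matrix n n ℂ)
    (hA : A = ζᴴ * (At ⊗ₖ (1 : Matrix rz rz ℂ)) * ζ) :
    (χ * χᴴ) * ((wᴴ * (At ⊗ₖ (1 : Matrix m m ℂ)) * w) ⊗ₖ (1 : Matrix rx rx ℂ)) =
      ((wᴴ * (At ⊗ₖ (1 : Matrix m m ℂ)) * w) ⊗ₖ (1 : Matrix rx rx ℂ)) * (χ * χᴴ) ∧
    A = χᴴ * ((wᴴ * (At ⊗ₖ (1 : Matrix m m ℂ)) * w) ⊗ₖ (1 : Matrix rx rx ℂ)) * χ := by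
  have hkey : ((wᴴ * (At ⊗ₖ (1 : Matrix m m ℂ)) * w) ⊗ₖ (1 : Matrix rx rx ℂ)) * χ =
      χ * (ζᴴ * (At ⊗ₖ (1 : Matrix rz rz ℂ)) * ζ) :=
    key_intertwine ζ χ hζ b w hw heq At hcons
  rw [← hA] at hkey
  have hcons' : (ζ * ζᴴ) * (Atᴴ ⊗ₖ (1 : Matrix rz rz ℂ)) =
      (Atᴴ ⊗ₖ (1 : Matrix rz rz ℂ)) * (ζ * ζᴴ) := by
    have := congrArg conjTranspose hcons
    simpa [conjTranspose_mul, kron_conjT, Matrix.mul_assoc] using this.symm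
  have hkey' : ((wᴴ * (Atᴴ ⊗ₖ (1 : Matrix m m ℂ)) * w) ⊗ₖ (1 : Matrix rx rx ℂ)) * χ =
      χ * (ζᴴ * (Atᴴ ⊗ₖ (1 : Matrix rz rz ℂ)) * ζ) :=
    key_intertwine ζ χ hζ b w hw heq Atᴴ hcons'
  have hAH : ζᴴ * (Atᴴ ⊗ₖ (1 : Matrix rz rz ℂ)) * ζ = Aᴴ := by
    rw [hA]
    simp [conjTranspose_mul, kron_conjT, Matrix.mul_assoc]
  rw [hAH] at hkey'
  have hadj : χᴴ * ((wᴴ * (At ⊗ₖ (1 : Matrix m m ℂ)) * w) ⊗ₖ (1 : Matrix rx rx ℂ)) =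
      A * χᴴ := by
    have := congrArg conjTranspose hkey'
    simpa [conjTranspose_mul, kron_conjT, Matrix.mul_assoc] using this
  constructor
  · calc (χ * χᴴ) * ((wᴴ * (At ⊗ₖ (1 : Matrix m m ℂ)) * w) ⊗ₖ (1 : Matrix rx rx ℂ))
        = χ * (χᴴ * ((wᴴ * (At ⊗ₖ (1 : Matrix m m ℂ)) * w) ⊗ₖ (1 : Matrix rx rx ℂ))) := by
          rw [Matrix.mul_assoc]
      _ = χ * (A * χᴴ) := by rw [hadj]
      _ = (χ * A) * χᴴ := by rw [Matrix.mul_assoc]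
      _ = (((wᴴ * (At ⊗ₖ (1 : Matrix m m ℂ)) * w) ⊗ₖ (1 : Matrix rx rx ℂ)) * χ) * χᴴ := by
          rw [hkey]
      _ = ((wᴴ * (At ⊗ₖ (1 : Matrix m m ℂ)) * w) ⊗ₖ (1 : Matrix rx rx ℂ)) * (χ * χᴴ) := by
          rw [Matrix.mul_assoc]
  · rw [hadj, Matrix.mul_assoc, hχ, Matrix.mul_one]
end

section
/- Let H = H1 ⊕ H2 and let χ : H → (H1 ⊕ ℂ) ⊗ (ℂ ⊕ H2) be the isometry sending x1 ⊕ x2 to x1 ⊗ e1 + e2 ⊗ x2, where e1, e2 are fixed unit vectors of the respective ℂ summands. Then the set of operators A ∈ L(H) of the form A = χ†(Ã ⊗ 1)χ for some Ã ∈ L(H1 ⊕ ℂ) equals the algebra L(H1) ⊕ ℂ·1_{H2} of operators acting as an arbitrary operator on H1 and as a scalar multiple of the identity on H2. -/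
open Matrix Kronecker

/-- The isometric embedding `H1 ⊕ H2 → (H1 ⊕ ℂ) ⊗ (ℂ ⊕ H2)`,
`x1 ⊕ x2 ↦ x1 ⊗ e1 + e2 ⊗ x2`, written as a matrix. -/
def chiOplus (h1 h2 : Type) [Fintype h1] [DecidableEq h1] [Fintype h2] [DecidableEq h2] :
    Matrix ((h1 ⊕ Unit) × (Unit ⊕ h2)) (h1 ⊕ h2) ℂ :=
  Matrix.of fun p q =>
    match p, q with
    | (Sum.inl a, Sum.inl _), Sum.inl a' => if a = a' then 1 else 0
    | (Sum.inr _, Sum.inr b), Sum.inr b' => if b = b' then 1 else 0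
    | _, _ => 0

lemma chiOplus_conj_eq (h1 h2 : Type) [Fintype h1] [DecidableEq h1] [Fintype h2]
    [DecidableEq h2] (At : Matrix (h1 ⊕ Unit) (h1 ⊕ Unit) ℂ) :
    (chiOplus h1 h2)ᴴ * (At ⊗ₖ (1 : Matrix (Unit ⊕ h2) (Unit ⊕ h2) ℂ)) * chiOplus h1 h2 =
    Matrix.fromBlocks (At.toBlocks₁₁) 0 0 (At (Sum.inr ()) (Sum.inr ()) • 1) := by
  ext i j
  simp only [Matrix.mul_apply, conjTranspose_apply, chiOplus, Matrix.of_apply,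
    kroneckerMap_apply, Fintype.sum_prod_type, Fintype.sum_sum_type, Fintype.sum_unique]
  cases i <;> cases j <;>
    simp [Matrix.one_apply, Matrix.fromBlocks, Matrix.toBlocks₁₁, apply_ite,
      Finset.sum_ite_eq, Finset.sum_ite_eq', mul_comm, eq_comm] <;> split_ifs <;> simp_all

/-- The `χ_⊕`-local operators, i.e. the operators of the form
`χ†(Ã ⊗ 1)χ`, are exactly the block-diagonal operators `B1 ⊕ λ·1_{H2}`. -/
theorem loc_chiOplus_eq_blockAlgebra (h1 h2 : Type)
    [Fintype h1] [DecidableEq h1] [Fintype h2] [DecidableEq h2] :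
    {A : Matrix (h1 ⊕ h2) (h1 ⊕ h2) ℂ |
      ∃ At : Matrix (h1 ⊕ Unit) (h1 ⊕ Unit) ℂ,
        A = (chiOplus h1 h2)ᴴ * (At ⊗ₖ (1 : Matrix (Unit ⊕ h2) (Unit ⊕ h2) ℂ)) *
              chiOplus h1 h2} =
    {A : Matrix (h1 ⊕ h2) (h1 ⊕ h2) ℂ |
      ∃ (B1 : Matrix h1 h1 ℂ) (lam : ℂ),
        A = Matrix.fromBlocks B1 0 0 (lam • (1 : Matrix h2 h2 ℂ))} := by
  ext A
  simp only [Set.mem_setOf_eq]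
  constructor
  · rintro ⟨At, rfl⟩
    exact ⟨At.toBlocks₁₁, At (Sum.inr ()) (Sum.inr ()), chiOplus_conj_eq h1 h2 At⟩
  · rintro ⟨B1, lam, rfl⟩
    refine ⟨Matrix.fromBlocks B1 0 0 (lam • (1 : Matrix Unit Unit ℂ)), ?_⟩
    rw [chiOplus_conj_eq, Matrix.toBlocks_fromBlocks₁₁]
    congr 1
    simp [Matrix.fromBlocks, Matrix.one_apply]
end

section
/- Let H = H1 ⊕ H2 and χ : H → (H1 ⊕ ℂ) ⊗ (ℂ ⊕ H2) the isometry x1 ⊕ x2 ↦ x1 ⊗ e1 + e2 ⊗ x2. Then an operator A ∈ L(H) is strictly χ-local (there is Ã with Aχ† = χ†(Ã⊗1) and χA = (Ã⊗1)χ) if and only if A ∈ L(H1) ⊕ ℂ·1_{H2}. -/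
open Matrix Kronecker

section aux
variable (h1 h2 : Type) [Fintype h1] [DecidableEq h1] [Fintype h2] [DecidableEq h2]

lemma aux_chiA_l (A : Matrix (h1 ⊕ h2) (h1 ⊕ h2) ℂ) (a : h1) (q : h1 ⊕ h2) :
    (chiOplus h1 h2 * A) (Sum.inl a, Sum.inl ()) q = A (Sum.inl a) q := by
  simp [Matrix.mul_apply, chiOplus, Fintype.sum_sum_type]

lemma aux_chiA_r (A : Matrix (h1 ⊕ h2) (h1 ⊕ h2) ℂ) (b : h2) (q : h1 ⊕ h2) :
    (chiOplus h1 h2 * A) (Sum.inr (), Sum.inr b) q = A (Sum.inr b) q := by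
  simp [Matrix.mul_apply, chiOplus, Fintype.sum_sum_type]

lemma aux_Atchi_lr (At : Matrix (h1 ⊕ Unit) (h1 ⊕ Unit) ℂ) (a : h1) (b : h2) :
    ((At ⊗ₖ (1 : Matrix (Unit ⊕ h2) (Unit ⊕ h2) ℂ)) * chiOplus h1 h2)
      (Sum.inl a, Sum.inl ()) (Sum.inr b) = 0 := by
  simp [Matrix.mul_apply, chiOplus, Fintype.sum_prod_type, Fintype.sum_sum_type,
    Matrix.one_apply, ite_and]

lemma aux_Atchi_rl (At : Matrix (h1 ⊕ Unit) (h1 ⊕ Unit) ℂ) (b : h2) (a : h1) :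
    ((At ⊗ₖ (1 : Matrix (Unit ⊕ h2) (Unit ⊕ h2) ℂ)) * chiOplus h1 h2)
      (Sum.inr (), Sum.inr b) (Sum.inl a) = 0 := by
  simp [Matrix.mul_apply, chiOplus, Fintype.sum_prod_type, Fintype.sum_sum_type,
    Matrix.one_apply, ite_and]

lemma aux_Atchi_rr (At : Matrix (h1 ⊕ Unit) (h1 ⊕ Unit) ℂ) (b b' : h2) :
    ((At ⊗ₖ (1 : Matrix (Unit ⊕ h2) (Unit ⊕ h2) ℂ)) * chiOplus h1 h2)
      (Sum.inr (), Sum.inr b) (Sum.inr b') =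
      if b = b' then At (Sum.inr ()) (Sum.inr ()) else 0 := by
  simp [Matrix.mul_apply, chiOplus, Fintype.sum_prod_type, Fintype.sum_sum_type,
    Matrix.one_apply, ite_and]

end aux

/-- An operator `A` is strictly `χ_⊕`-local iff it belongs to
`L(H1) ⊕ ℂ·1_{H2}`. -/
theorem stloc_chiOplus_iff_blockAlgebra (h1 h2 : Type)
    [Fintype h1] [DecidableEq h1] [Fintype h2] [DecidableEq h2]
    (A : Matrix (h1 ⊕ h2) (h1 ⊕ h2) ℂ) :
    (∃ At : Matrix (h1 ⊕ Unit) (h1 ⊕ Unit) ℂ,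
        A * (chiOplus h1 h2)ᴴ =
          (chiOplus h1 h2)ᴴ * (At ⊗ₖ (1 : Matrix (Unit ⊕ h2) (Unit ⊕ h2) ℂ)) ∧
        chiOplus h1 h2 * A =
          (At ⊗ₖ (1 : Matrix (Unit ⊕ h2) (Unit ⊕ h2) ℂ)) * chiOplus h1 h2) ↔
    (∃ (B1 : Matrix h1 h1 ℂ) (lam : ℂ),
        A = Matrix.fromBlocks B1 0 0 (lam • (1 : Matrix h2 h2 ℂ))) := by
  constructor
  · rintro ⟨At, -, h⟩
    refine ⟨fun a a' => A (Sum.inl a) (Sum.inl a'), At (Sum.inr ()) (Sum.inr ()), ?_⟩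
    ext i j
    cases i with
    | inl a =>
      cases j with
      | inl a' => simp [Matrix.fromBlocks]
      | inr b =>
        have := congrFun (congrFun h (Sum.inl a, Sum.inl ())) (Sum.inr b)
        rw [aux_chiA_l, aux_Atchi_lr] at this
        simpa [Matrix.fromBlocks] using this
    | inr b =>
      cases j with
      | inl a =>
        have := congrFun (congrFun h (Sum.inr (), Sum.inr b)) (Sum.inl a)
        rw [aux_chiA_r, aux_Atchi_rl] at this
        simpa [Matrix.fromBlocks] using this
      | inr b' =>
        have := congrFun (congrFun h (Sum.inr (), Sum.inr b)) (Sum.inr b')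
        rw [aux_chiA_r, aux_Atchi_rr] at this
        simp [Matrix.fromBlocks, Matrix.one_apply, this, Matrix.smul_apply]
  · rintro ⟨B1, lam, rfl⟩
    refine ⟨Matrix.fromBlocks B1 0 0 (Matrix.of fun _ _ => lam), ?_, ?_⟩
    · ext q p
      obtain ⟨c, d⟩ := p
      cases q <;> cases c <;> cases d <;>
      simp [Matrix.mul_apply, chiOplus, Matrix.conjTranspose_apply,
        Fintype.sum_prod_type, Fintype.sum_sum_type, Matrix.one_apply,
        Matrix.fromBlocks, ite_and, Matrix.smul_apply, apply_ite] <;>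
      (try (split <;> simp_all [eq_comm]))
    · ext p q
      obtain ⟨c, d⟩ := p
      cases c <;> cases d <;> cases q <;>
      simp [Matrix.mul_apply, chiOplus, Fintype.sum_prod_type, Fintype.sum_sum_type,
        Matrix.one_apply, Matrix.fromBlocks, ite_and, Matrix.smul_apply, apply_ite] <;>
      (try (split <;> simp_all [eq_comm]))
end

section
/- Let χ : H → H_L ⊗ H_R be an isometry such that stloc_L(χ) equals the commutant of stloc_R(χ) in L(H) (χ is balanced). Then the left χ-local operators coincide with the strictly left χ-local operators: loc_L(χ) = stloc_L(χ). -/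
open Matrix Kronecker

/-- Left `χ`-local operators: `{ χ†(Ã⊗1)χ }`. -/
def locL {n l r : Type} [Fintype n] [DecidableEq n]
    [Fintype l] [DecidableEq l] [Fintype r] [DecidableEq r]
    (χ : Matrix (l × r) n ℂ) : Set (Matrix n n ℂ) :=
  {A | ∃ At : Matrix l l ℂ, A = χᴴ * (At ⊗ₖ (1 : Matrix r r ℂ)) * χ}

/-- Strictly left `χ`-local operators. -/
def stlocL {n l r : Type} [Fintype n] [DecidableEq n]
    [Fintype l] [DecidableEq l] [Fintype r] [DecidableEq r]
    (χ : Matrix (l × r) n ℂ) : Set (Matrix n n ℂ) :=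
  {A | ∃ At : Matrix l l ℂ,
    A * χᴴ = χᴴ * (At ⊗ₖ (1 : Matrix r r ℂ)) ∧
    χ * A = (At ⊗ₖ (1 : Matrix r r ℂ)) * χ}

/-- Strictly right `χ`-local operators. -/
def stlocR {n l r : Type} [Fintype n] [DecidableEq n]
    [Fintype l] [DecidableEq l] [Fintype r] [DecidableEq r]
    (χ : Matrix (l × r) n ℂ) : Set (Matrix n n ℂ) :=
  {A | ∃ At : Matrix r r ℂ,
    A * χᴴ = χᴴ * ((1 : Matrix l l ℂ) ⊗ₖ At) ∧
    χ * A = ((1 : Matrix l l ℂ) ⊗ₖ At) * χ}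

/-- If `χ` is balanced (`stloc_L(χ)` is the commutant of `stloc_R(χ)`),
then `loc_L(χ) = stloc_L(χ)`. -/
theorem balanced_implies_loc_eq_stloc {n l r : Type} [Fintype n] [DecidableEq n]
    [Fintype l] [DecidableEq l] [Fintype r] [DecidableEq r]
    (χ : Matrix (l × r) n ℂ) (hχ : χᴴ * χ = 1)
    (hbal : stlocL χ = {A : Matrix n n ℂ | ∀ B ∈ stlocR χ, A * B = B * A}) :
    locL χ = stlocL χ := by
  have key : ∀ At : Matrix l l ℂ, ∀ Bt : Matrix r r ℂ,
      (At ⊗ₖ (1 : Matrix r r ℂ)) * ((1 : Matrix l l ℂ) ⊗ₖ Bt)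
        = ((1 : Matrix l l ℂ) ⊗ₖ Bt) * (At ⊗ₖ (1 : Matrix r r ℂ)) := by
    intro At Bt
    rw [← Matrix.mul_kronecker_mul, ← Matrix.mul_kronecker_mul, one_mul, mul_one, one_mul, mul_one]
  ext A
  constructor
  · rintro ⟨At, rfl⟩
    rw [hbal]
    rintro B ⟨Bt, hB1, hB2⟩
    rw [Matrix.mul_assoc _ χ B, hB2, ← Matrix.mul_assoc _ _ χ, Matrix.mul_assoc χᴴ, key,
      ← Matrix.mul_assoc χᴴ, ← hB1, Matrix.mul_assoc, Matrix.mul_assoc, Matrix.mul_assoc]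
  · rintro ⟨At, h1, h2⟩
    refine ⟨At, ?_⟩
    rw [← h1, Matrix.mul_assoc, hχ, mul_one]
end
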